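/- For every (t,x) ∈ ℕ × ∂B with t ≥ 1 and every function f : ℤ^d → ℝ vanishing outside B, one has E[(N_{t,x} f)(Z^x_t)] = E[(N f)(Z^x_t)], where N_{t,x} f denotes the function on {y − s e_d : (s,y) ∈ S(t,x)} determined by the vector N_{t,x} applied to (f(z + u e_d))_{(u,z)∈S(t,x)} (and zero elsewhere). -/

import Mathlib

open Finset

/-- The `i`-th standard unit vector `e_i` in `ℤ^(d+1)`. -/
def unitVec (d : ℕ) (i : Fin (d + 1)) : Fin (d + 1) → ℤ := Pi.single i 1

/-- The ℓ¹-norm `‖v‖₁ = ∑ i, |v i|` on `ℤ^(d+1)`. -/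
def norm1 {d : ℕ} (v : Fin (d + 1) → ℤ) : ℤ := ∑ i, |v i|

/-- `P t x z` represents the `t`-step transition probability `P(Z^x_t = z)` of a
time-homogeneous Markov chain on `ℤ^(d+1)` which at each step moves by `± e_i`,
with all `2(d+1)` one-step probabilities strictly positive and summing to `1`. -/
structure IsRandomWalk (d : ℕ)
    (P : ℕ → (Fin (d + 1) → ℤ) → (Fin (d + 1) → ℤ) → ℝ) : Prop where
  nonneg : ∀ t x z, 0 ≤ P t x z
  init : ∀ x z, P 0 x z = if z = x then 1 else 0
  step : ∀ t x z, P (t + 1) x z =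
      ∑ i, P 1 x (x + unitVec d i) * P t (x + unitVec d i) z
        + ∑ i, P 1 x (x - unitVec d i) * P t (x - unitVec d i) z
  sum_one : ∀ x, (∑ i, P 1 x (x + unitVec d i)) + (∑ i, P 1 x (x - unitVec d i)) = 1
  pos_add : ∀ x i, 0 < P 1 x (x + unitVec d i)
  pos_sub : ∀ x i, 0 < P 1 x (x - unitVec d i)

/-- The expectation `E[h(Z^x_t)]` (the law of `Z^x_t` has finite support). -/
noncomputable def expect {d : ℕ} (P : ℕ → (Fin (d + 1) → ℤ) → (Fin (d + 1) → ℤ) → ℝ)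
    (t : ℕ) (x : Fin (d + 1) → ℤ) (h : (Fin (d + 1) → ℤ) → ℝ) : ℝ :=
  ∑ᶠ z, h z * P t x z

/-- The finite set `S(t,x) = {(s,y) ∈ ℕ × ∂B : 1 ≤ s ≤ t, ‖y − x‖₁ ≤ t − s,
and t − s − ‖y − x‖₁ is even}`. -/
noncomputable def Sset (d t : ℕ) (x : Fin (d + 1) → ℤ) : Finset (ℕ × (Fin (d + 1) → ℤ)) :=
  ((Finset.Icc 1 t) ×ˢ (Fintype.piFinset fun i => Finset.Icc (x i - t) (x i + t))).filter
    (fun p => p.2 (Fin.last d) = 0 ∧ norm1 (p.2 - x) ≤ (t : ℤ) - p.1 ∧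
      Even ((t : ℤ) - p.1 - norm1 (p.2 - x)))

/-- The matrix `W^+_{t,x}`, with entries `(W^+)_{(s,y),(u,z)} = P(Z^y_s = z + u e_d)`. -/
noncomputable def Wplus {d : ℕ} (P : ℕ → (Fin (d + 1) → ℤ) → (Fin (d + 1) → ℤ) → ℝ)
    (t : ℕ) (x : Fin (d + 1) → ℤ) :
    Matrix {p // p ∈ Sset d t x} {p // p ∈ Sset d t x} ℝ :=
  fun p q => P p.1.1 p.1.2 (q.1.2 + Pi.single (Fin.last d) (q.1.1 : ℤ))

/-- The matrix `W^-_{t,x}`, with entries `(W^-)_{(s,y),(u,z)} = P(Z^y_s = z - u e_d)`. -/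
noncomputable def Wminus {d : ℕ} (P : ℕ → (Fin (d + 1) → ℤ) → (Fin (d + 1) → ℤ) → ℝ)
    (t : ℕ) (x : Fin (d + 1) → ℤ) :
    Matrix {p // p ∈ Sset d t x} {p // p ∈ Sset d t x} ℝ :=
  fun p q => P p.1.1 p.1.2 (q.1.2 - Pi.single (Fin.last d) (q.1.1 : ℤ))

/-- `N_{t,x} = (W^-_{t,x})⁻¹ W^+_{t,x}`. -/
noncomputable def Nmat {d : ℕ} (P : ℕ → (Fin (d + 1) → ℤ) → (Fin (d + 1) → ℤ) → ℝ)
    (t : ℕ) (x : Fin (d + 1) → ℤ) :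
    Matrix {p // p ∈ Sset d t x} {p // p ∈ Sset d t x} ℝ :=
  (Wminus P t x)⁻¹ * Wplus P t x

/-- The extended transform `N f`, vanishing outside `{w : w_d < 0}`, defined at a point
`w = x − t e_d` (with `x ∈ ∂B`, `t ≥ 1`) as the `(t,x)`-component of `N_{t,x}` applied to
the vector `(f(z + u e_d))_{(u,z) ∈ S(t,x)}`.  (Note that `(t,x) ∈ S(t,x)` always holds
in this situation, so the guard below is satisfied exactly when `w_d < 0`.) -/
noncomputable def Ntrans {d : ℕ} (P : ℕ → (Fin (d + 1) → ℤ) → (Fin (d + 1) → ℤ) → ℝ)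
    (f : (Fin (d + 1) → ℤ) → ℝ) : (Fin (d + 1) → ℤ) → ℝ := fun w =>
  if hm : ((-(w (Fin.last d))).toNat, Function.update w (Fin.last d) 0) ∈
      Sset d (-(w (Fin.last d))).toNat (Function.update w (Fin.last d) 0) then
    (Nmat P (-(w (Fin.last d))).toNat (Function.update w (Fin.last d) 0)).mulVec
      (fun p => f (p.1.2 + Pi.single (Fin.last d) (p.1.1 : ℤ)))
      ⟨((-(w (Fin.last d))).toNat, Function.update w (Fin.last d) 0), hm⟩
  else 0

/-- The function `N_{t,x} f` on `ℤ^(d+1)`: supported on `{y − s e_d : (s,y) ∈ S(t,x)}`,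
where its value at `y − s e_d` is the `(s,y)`-component of `N_{t,x}` applied to the vector
`(f(z + u e_d))_{(u,z) ∈ S(t,x)}`; zero elsewhere. -/
noncomputable def NmatFun {d : ℕ} (P : ℕ → (Fin (d + 1) → ℤ) → (Fin (d + 1) → ℤ) → ℝ)
    (t : ℕ) (x : Fin (d + 1) → ℤ) (f : (Fin (d + 1) → ℤ) → ℝ) :
    (Fin (d + 1) → ℤ) → ℝ := fun w =>
  if hm : ((-(w (Fin.last d))).toNat, Function.update w (Fin.last d) 0) ∈ Sset d t x then
    (Nmat P t x).mulVec (fun p => f (p.1.2 + Pi.single (Fin.last d) (p.1.1 : ℤ)))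
      ⟨((-(w (Fin.last d))).toNat, Function.update w (Fin.last d) 0), hm⟩
  else 0

/-!
The entries `P(Z^y_s = z ± u e_d)` of `W^±_{t,x}` vanish unless `(u, z)` lies in the light cone
below `(s, y)`, so `W^±_{t,x}`, and with them `(W^-_{t,x})⁻¹` and `N_{t,x}`, are triangular for the
cone order; `W^-_{t,x}` is invertible since its diagonal entries `P(Z^y_s = y - s e_d)` are
positive. For `(s, y) ∈ S(t,x)` the set `S(s,y)` is a down-set of `S(t,x)`, and restricting
triangular matrices to a down-set commutes with products and inverses. Hence `N_{s,y}` is the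
restriction of `N_{t,x}`, and the `(s, y)`-entries of `N_{t,x} f` and `N_{s,y} f` agree: `N_{t,x} f`
and `N f` coincide at every point `y - s e_d` that `Z^x_t` can reach.
-/

namespace Matrix

variable {ι κ R K : Type*} [Fintype ι] [Fintype κ]

def SupportedIn [Zero R] (r : ι → ι → Prop) (M : Matrix ι ι R) : Prop :=
  ∀ i j, M i j ≠ 0 → r i j

theorem inv_mem_subalgebra [DecidableEq ι] [Field K] {S : Subalgebra K (Matrix ι ι K)}
    {A : Matrix ι ι K} (hA : A ∈ S) : A⁻¹ ∈ S := by
  by_cases hdet : IsUnit A.det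
  · have hinj : Function.Injective (LinearMap.mulLeft K (⟨A, hA⟩ : S)) := fun u v huv =>
      Subtype.ext <| ((isUnit_iff_isUnit_det A).mpr hdet).mul_right_injective
        (congrArg Subtype.val huv)
    obtain ⟨X, hX⟩ := LinearMap.injective_iff_surjective.mp hinj 1
    rw [inv_eq_right_inv (congrArg Subtype.val hX)]
    exact X.2
  · rw [nonsing_inv_apply_not_isUnit A hdet]
    exact S.zero_mem

theorem det_eq_prod_diag_of_offDiag_lt [DecidableEq ι] [CommRing R] {α : Type*} [LinearOrder α]
    (M : Matrix ι ι R) (b : ι → α) (hb : ∀ i j, i ≠ j → M i j ≠ 0 → b j < b i) :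
    M.det = ∏ i, M i i := by
  -- break the ties of `b` to get a linear order on `ι` for which `M` is lower triangular
  let key : ι → Lex (α × Fin (Fintype.card ι)) := fun i => toLex (b i, Fintype.equivFin ι i)
  have hkey : Function.Injective key := fun i j h =>
    (Fintype.equivFin ι).injective (congrArg (fun p => (ofLex p).2) h)
  let _ : LinearOrder ι := LinearOrder.lift' key hkey
  refine det_of_isLowerTriangular M fun i j (hij : i < j) => of_not_not fun hM => ?_
  have hle : b i ≤ b j :=
    (Prod.Lex.toLex_lt_toLex.mp (show key i < key j from hij)).elim le_of_lt (·.1.le)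
  exact (hb i j hij.ne hM).not_ge hle

namespace SupportedIn

variable {r : ι → ι → Prop}

theorem mul [CommSemiring R] (ht : ∀ ⦃i j k⦄, r i j → r j k → r i k) {A B : Matrix ι ι R}
    (hA : SupportedIn r A) (hB : SupportedIn r B) : SupportedIn r (A * B) := by
  intro i j hij
  obtain ⟨k, -, hk⟩ := exists_ne_zero_of_sum_ne_zero hij
  exact ht (hA i k (left_ne_zero_of_mul hk)) (hB k j (right_ne_zero_of_mul hk))

variable (R) in
def subalgebra [DecidableEq ι] [CommSemiring R] (hr : ∀ i, r i i)
    (ht : ∀ ⦃i j k⦄, r i j → r j k → r i k) : Subalgebra R (Matrix ι ι R) where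
  carrier := {M | SupportedIn r M}
  mul_mem' hA hB := hA.mul ht hB
  add_mem' {A B} hA hB i j hij := by
    by_contra h
    simp [add_apply, of_not_not (mt (hA i j) h), of_not_not (mt (hB i j) h)] at hij
  algebraMap_mem' c i j hij := by
    by_contra h
    have hne : i ≠ j := fun e => h (e ▸ hr i)
    simp [algebraMap_matrix_apply, hne] at hij

theorem inv [DecidableEq ι] [Field K] (hr : ∀ i, r i i) (ht : ∀ ⦃i j k⦄, r i j → r j k → r i k)
    {A : Matrix ι ι K} (hA : SupportedIn r A) : SupportedIn r A⁻¹ :=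
  inv_mem_subalgebra (S := subalgebra K hr ht) hA

variable [CommSemiring R] {e : κ → ι}

theorem sum_apply_mul_eq_sum_comp {A : Matrix ι ι R} (hA : SupportedIn r A)
    (he : Function.Injective e) (hclosed : ∀ a i, r (e a) i → i ∈ Set.range e) (a : κ) (g : ι → R) :
    ∑ i, A (e a) i * g i = ∑ b, A (e a) (e b) * g (e b) := by
  refine (Fintype.sum_of_injective e he _ _ (fun i hi => ?_) fun _ => rfl).symm
  by_contra h
  exact hi (hclosed a i (hA _ _ (left_ne_zero_of_mul h)))

theorem mulVec_apply {A : Matrix ι ι R} (hA : SupportedIn r A) (he : Function.Injective e)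
    (hclosed : ∀ a i, r (e a) i → i ∈ Set.range e) (v : ι → R) (a : κ) :
    (A *ᵥ v) (e a) = (A.submatrix e e *ᵥ (v ∘ e)) a :=
  hA.sum_apply_mul_eq_sum_comp he hclosed a v

theorem submatrix_mul {A : Matrix ι ι R} (hA : SupportedIn r A) (he : Function.Injective e)
    (hclosed : ∀ a i, r (e a) i → i ∈ Set.range e) (B : Matrix ι ι R) :
    (A * B).submatrix e e = A.submatrix e e * B.submatrix e e := by
  ext a c
  exact hA.sum_apply_mul_eq_sum_comp he hclosed a (fun i => B i (e c))

theorem submatrix_inv [DecidableEq ι] [DecidableEq κ] [Field K] (hr : ∀ i, r i i)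
    (ht : ∀ ⦃i j k⦄, r i j → r j k → r i k) {A : Matrix ι ι K} (hA : SupportedIn r A)
    (hdet : IsUnit A.det) (he : Function.Injective e)
    (hclosed : ∀ a i, r (e a) i → i ∈ Set.range e) :
    A⁻¹.submatrix e e = (A.submatrix e e)⁻¹ := by
  refine (inv_eq_left_inv ?_).symm
  rw [← (hA.inv hr ht).submatrix_mul he hclosed, nonsing_inv_mul A hdet, submatrix_one e he]

end SupportedIn

end Matrix

theorem norm1_nonneg {d : ℕ} (v : Fin (d + 1) → ℤ) : 0 ≤ norm1 v :=
  sum_nonneg fun _ _ => abs_nonneg _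

theorem norm1_neg {d : ℕ} (v : Fin (d + 1) → ℤ) : norm1 (-v) = norm1 v := by
  simp [norm1]

theorem norm1_eq_zero {d : ℕ} {v : Fin (d + 1) → ℤ} : norm1 v = 0 ↔ v = 0 := by
  simp [norm1, sum_eq_zero_iff_of_nonneg, funext_iff]

theorem norm1_add_le {d : ℕ} (v w : Fin (d + 1) → ℤ) : norm1 (v + w) ≤ norm1 v + norm1 w := by
  rw [norm1, norm1, norm1, ← sum_add_distrib]
  exact sum_le_sum fun i _ => abs_add_le (v i) (w i)

theorem even_norm1_add_sub {d : ℕ} (v w : Fin (d + 1) → ℤ) :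
    Even (norm1 v + norm1 w - norm1 (v + w)) := by
  rw [norm1, norm1, norm1, ← sum_add_distrib, ← sum_sub_distrib]
  refine even_sum _ fun i _ => ?_
  rw [Int.even_iff]
  simp only [Pi.add_apply]
  rcases abs_cases (v i) with ⟨h1, -⟩ | ⟨h1, -⟩ <;>
    rcases abs_cases (w i) with ⟨h2, -⟩ | ⟨h2, -⟩ <;>
    rcases abs_cases (v i + w i) with ⟨h3, -⟩ | ⟨h3, -⟩ <;> omega

theorem norm1_add_single_of_eq_zero {d : ℕ} {v : Fin (d + 1) → ℤ} {i : Fin (d + 1)}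
    (hv : v i = 0) (c : ℤ) : norm1 (v + Pi.single i c) = norm1 v + |c| := by
  have hsplit : ∀ j, |v j + (Pi.single i c : Fin (d + 1) → ℤ) j|
      = |v j| + (Pi.single i |c| : Fin (d + 1) → ℤ) j := fun j => by
    by_cases hj : j = i
    · subst hj; simp [hv]
    · simp [hj]
  simp only [norm1, Pi.add_apply, hsplit, sum_add_distrib, sum_pi_single', mem_univ, if_true]

theorem norm1_unitVec (d : ℕ) (i : Fin (d + 1)) : norm1 (unitVec d i) = 1 := by
  have h := norm1_add_single_of_eq_zero (v := (0 : Fin (d + 1) → ℤ)) (i := i) rfl 1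
  rwa [zero_add, norm1_eq_zero.mpr rfl, zero_add, abs_one] at h

/-- The light-cone order on space-time: `ConeLE q p` when a nearest-neighbour walk started at
`p.2` is not excluded, by `ℓ¹`-distance or parity, from being at `q.2` after `p.1 - q.1` steps. -/
def ConeLE {d : ℕ} (q p : ℕ × (Fin (d + 1) → ℤ)) : Prop :=
  norm1 (q.2 - p.2) ≤ (p.1 : ℤ) - q.1 ∧ Even ((p.1 : ℤ) - q.1 - norm1 (q.2 - p.2))

namespace ConeLE

variable {d : ℕ}

theorem refl (p : ℕ × (Fin (d + 1) → ℤ)) : ConeLE p p := by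
  simp [ConeLE, norm1_eq_zero.mpr]

theorem trans {a b c : ℕ × (Fin (d + 1) → ℤ)} (hab : ConeLE a b) (hbc : ConeLE b c) :
    ConeLE a c := by
  obtain ⟨hab_le, hab_even⟩ := hab
  obtain ⟨hbc_le, hbc_even⟩ := hbc
  have hsplit : a.2 - c.2 = (a.2 - b.2) + (b.2 - c.2) := by abel
  have htri := norm1_add_le (a.2 - b.2) (b.2 - c.2)
  have hpar := even_norm1_add_sub (a.2 - b.2) (b.2 - c.2)
  rw [← hsplit] at htri hpar
  rw [Int.even_iff] at hab_even hbc_even hpar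
  exact ⟨by omega, Int.even_iff.mpr (by omega)⟩

theorem eq_or_fst_lt {q p : ℕ × (Fin (d + 1) → ℤ)} (h : ConeLE q p) : q = p ∨ q.1 < p.1 := by
  have hn := norm1_nonneg (q.2 - p.2)
  rcases (show q.1 < p.1 ∨ q.1 = p.1 by have := h.1; omega) with hlt | heq
  · exact Or.inr hlt
  · have h0 : norm1 (q.2 - p.2) = 0 := by have := h.1; omega
    exact Or.inl (Prod.ext heq (sub_eq_zero.mp (norm1_eq_zero.mp h0)))

end ConeLE

theorem mem_Sset_iff {d t : ℕ} {x : Fin (d + 1) → ℤ} {p : ℕ × (Fin (d + 1) → ℤ)} :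
    p ∈ Sset d t x ↔ 1 ≤ p.1 ∧ p.2 (Fin.last d) = 0 ∧ ConeLE p (t, x) := by
  simp only [Sset, mem_filter, mem_product, mem_Icc, Fintype.mem_piFinset, ConeLE]
  constructor
  · rintro ⟨⟨hp, -⟩, hlast, hcone⟩
    exact ⟨hp.1, hlast, hcone⟩
  · rintro ⟨hp, hlast, hle, heven⟩
    have hn := norm1_nonneg (p.2 - x)
    refine ⟨⟨⟨hp, by omega⟩, fun i => ?_⟩, hlast, hle, heven⟩
    have hi : |p.2 i - x i| ≤ norm1 (p.2 - x) :=
      single_le_sum (f := fun i => |(p.2 - x) i|) (fun _ _ => abs_nonneg _) (mem_univ i)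
    have := abs_le.mp (hi.trans (by omega : norm1 (p.2 - x) ≤ t))
    constructor <;> omega

theorem self_mem_Sset {d s : ℕ} {y : Fin (d + 1) → ℤ} (hs : 1 ≤ s) (hy : y (Fin.last d) = 0) :
    (s, y) ∈ Sset d s y :=
  mem_Sset_iff.mpr ⟨hs, hy, ConeLE.refl _⟩

theorem Sset_subset {d s t : ℕ} {x y : Fin (d + 1) → ℤ} (h : (s, y) ∈ Sset d t x) :
    Sset d s y ⊆ Sset d t x := fun p hp => by
  obtain ⟨hp1, hp2, hpy⟩ := mem_Sset_iff.mp hp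
  exact mem_Sset_iff.mpr ⟨hp1, hp2, hpy.trans (mem_Sset_iff.mp h).2.2⟩

namespace IsRandomWalk

variable {d : ℕ} {P : ℕ → (Fin (d + 1) → ℤ) → (Fin (d + 1) → ℤ) → ℝ}

theorem exists_step_of_ne_zero (hP : IsRandomWalk d P) {n : ℕ} {y w : Fin (d + 1) → ℤ}
    (h : P (n + 1) y w ≠ 0) : ∃ v, norm1 (v - y) = 1 ∧ P n v w ≠ 0 := by
  by_contra! hne
  refine h ?_
  rw [hP.step, sum_eq_zero fun i _ => ?_, sum_eq_zero fun i _ => ?_, add_zero]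
  · rw [hne _ (by rw [sub_sub_cancel_left, norm1_neg, norm1_unitVec]), mul_zero]
  · rw [hne _ (by rw [add_sub_cancel_left, norm1_unitVec]), mul_zero]

theorem coneLE_of_ne_zero (hP : IsRandomWalk d P) {s : ℕ} {y w : Fin (d + 1) → ℤ}
    (h : P s y w ≠ 0) : ConeLE (0, w) (s, y) := by
  induction s generalizing y with
  | zero =>
    rw [hP.init] at h
    obtain rfl : w = y := of_not_not fun hwy => h (if_neg hwy)
    exact ConeLE.refl _
  | succ n ih =>
    obtain ⟨v, hv, hvw⟩ := hP.exists_step_of_ne_zero h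
    refine (ih hvw).trans ⟨?_, ?_⟩ <;> simp [hv]

theorem coneLE_of_ne_zero_add_single (hP : IsRandomWalk d P) {s : ℕ} {y z : Fin (d + 1) → ℤ}
    (hy : y (Fin.last d) = 0) (hz : z (Fin.last d) = 0) {c : ℤ}
    (h : P s y (z + Pi.single (Fin.last d) c) ≠ 0) : ConeLE (c.natAbs, z) (s, y) := by
  obtain ⟨hle, heven⟩ := hP.coneLE_of_ne_zero h
  have hnorm : norm1 (z + Pi.single (Fin.last d) c - y) = norm1 (z - y) + |c| := by
    rw [add_sub_right_comm, norm1_add_single_of_eq_zero (by simp [hy, hz])]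
  simp only [hnorm, Nat.cast_zero, sub_zero] at hle heven
  show norm1 (z - y) ≤ (s : ℤ) - c.natAbs ∧ Even ((s : ℤ) - c.natAbs - norm1 (z - y))
  rw [Int.natCast_natAbs]
  exact ⟨by omega, by convert heven using 1; ring⟩

theorem pos_sub_single (hP : IsRandomWalk d P) (s : ℕ) (y : Fin (d + 1) → ℤ) :
    0 < P s y (y - Pi.single (Fin.last d) (s : ℤ)) := by
  induction s generalizing y with
  | zero => simp [hP.init]
  | succ n ih =>
    have hsplit : y - Pi.single (Fin.last d) ((n + 1 : ℕ) : ℤ)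
        = y - unitVec d (Fin.last d) - Pi.single (Fin.last d) (n : ℤ) := by
      rw [unitVec, sub_sub, ← Pi.single_add]
      push_cast
      ring_nf
    rw [hP.step]
    refine add_pos_of_nonneg_of_pos
      (sum_nonneg fun i _ => mul_nonneg (hP.nonneg _ _ _) (hP.nonneg _ _ _))
      (sum_pos' (fun i _ => mul_nonneg (hP.nonneg _ _ _) (hP.nonneg _ _ _))
        ⟨Fin.last d, mem_univ _, mul_pos (hP.pos_sub _ _) ?_⟩)
    rw [hsplit]
    exact ih _

end IsRandomWalk

section TransitionMatrices

variable {d : ℕ} {P : ℕ → (Fin (d + 1) → ℤ) → (Fin (d + 1) → ℤ) → ℝ} {t : ℕ}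
  {x : Fin (d + 1) → ℤ}

theorem Wplus_supportedIn (hP : IsRandomWalk d P) :
    (Wplus P t x).SupportedIn fun p q => ConeLE q.1 p.1 := fun p q h => by
  obtain ⟨-, hp, -⟩ := mem_Sset_iff.mp p.2
  obtain ⟨-, hq, -⟩ := mem_Sset_iff.mp q.2
  simpa using hP.coneLE_of_ne_zero_add_single hp hq h

theorem Wminus_supportedIn (hP : IsRandomWalk d P) :
    (Wminus P t x).SupportedIn fun p q => ConeLE q.1 p.1 := fun p q h => by
  obtain ⟨-, hp, -⟩ := mem_Sset_iff.mp p.2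
  obtain ⟨-, hq, -⟩ := mem_Sset_iff.mp q.2
  rw [Wminus, sub_eq_add_neg, ← Pi.single_neg] at h
  simpa using hP.coneLE_of_ne_zero_add_single hp hq h

theorem Wminus_det_isUnit (hP : IsRandomWalk d P) : IsUnit (Wminus P t x).det := by
  rw [Matrix.det_eq_prod_diag_of_offDiag_lt _ (fun p => p.1.1) fun p q hpq h =>
    ((Wminus_supportedIn hP p q h).eq_or_fst_lt.resolve_left fun e => hpq (Subtype.ext e.symm))]
  exact (prod_pos fun p _ => hP.pos_sub_single p.1.1 p.1.2).ne'.isUnit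

theorem Wminus_inv_supportedIn (hP : IsRandomWalk d P) :
    (Wminus P t x)⁻¹.SupportedIn fun p q => ConeLE q.1 p.1 :=
  (Wminus_supportedIn hP).inv (fun p => .refl p.1) fun _ _ _ h₁ h₂ => h₂.trans h₁

theorem Nmat_supportedIn (hP : IsRandomWalk d P) :
    (Nmat P t x).SupportedIn fun p q => ConeLE q.1 p.1 :=
  (Wminus_inv_supportedIn hP).mul (fun _ _ _ h₁ h₂ => h₂.trans h₁) (Wplus_supportedIn hP)

theorem Nmat_mulVec_apply_of_mem (hP : IsRandomWalk d P) {s : ℕ} {y : Fin (d + 1) → ℤ}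
    (hmem : (s, y) ∈ Sset d t x) (hself : (s, y) ∈ Sset d s y)
    (v : ℕ × (Fin (d + 1) → ℤ) → ℝ) :
    (Nmat P t x).mulVec (fun p => v p.1) ⟨(s, y), hmem⟩
      = (Nmat P s y).mulVec (fun p => v p.1) ⟨(s, y), hself⟩ := by
  let e : {p // p ∈ Sset d s y} → {p // p ∈ Sset d t x} := fun p => ⟨p.1, Sset_subset hmem p.2⟩
  have he : Function.Injective e := fun p q h => Subtype.ext (Subtype.mk.inj h)
  have hclosed : ∀ a i, ConeLE i.1 (e a).1 → i ∈ Set.range e := fun a i hi => by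
    obtain ⟨hi1, hi2, -⟩ := mem_Sset_iff.mp i.2
    exact ⟨⟨i.1, mem_Sset_iff.mpr ⟨hi1, hi2, hi.trans (mem_Sset_iff.mp a.2).2.2⟩⟩, rfl⟩
  have hN : (Nmat P t x).submatrix e e = Nmat P s y := by
    rw [Nmat, (Wminus_inv_supportedIn hP).submatrix_mul he hclosed,
      (Wminus_supportedIn hP).submatrix_inv (fun p => .refl p.1)
        (fun _ _ _ h₁ h₂ => h₂.trans h₁) (Wminus_det_isUnit hP) he hclosed]
    rfl
  rw [← hN]
  exact (Nmat_supportedIn hP).mulVec_apply he hclosed _ ⟨(s, y), hself⟩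

theorem NmatFun_eq_Ntrans_of_ne_zero (hP : IsRandomWalk d P) (hx : x (Fin.last d) = 0)
    (f : (Fin (d + 1) → ℤ) → ℝ) {w : Fin (d + 1) → ℤ} (hw : P t x w ≠ 0) :
    NmatFun P t x f w = Ntrans P f w := by
  have hwy : Function.update w (Fin.last d) 0 + Pi.single (Fin.last d) (w (Fin.last d)) = w := by
    ext j
    by_cases hj : j = Fin.last d
    · subst hj; simp
    · simp [hj]
  have hcone := hP.coneLE_of_ne_zero_add_single hx (Function.update_self _ _ _) (hwy ▸ hw)
  unfold NmatFun Ntrans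
  generalize hs_def : (-w (Fin.last d)).toNat = s
  generalize hy_def : Function.update w (Fin.last d) 0 = y at hcone
  have hy : y (Fin.last d) = 0 := hy_def ▸ Function.update_self _ _ _
  by_cases hs : 1 ≤ s
  · have hmem : (s, y) ∈ Sset d t x :=
      mem_Sset_iff.mpr ⟨hs, hy, by convert hcone using 3; omega⟩
    rw [dif_pos hmem, dif_pos (self_mem_Sset hs hy)]
    exact Nmat_mulVec_apply_of_mem hP hmem _ fun p => f (p.2 + Pi.single (Fin.last d) (p.1 : ℤ))
  · have hnot : ∀ t' x', (s, y) ∉ Sset d t' x' := fun _ _ h => hs (mem_Sset_iff.mp h).1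
    rw [dif_neg (hnot _ _), dif_neg (hnot _ _)]

end TransitionMatrices

theorem stmt_14_general (d : ℕ) (P : ℕ → (Fin (d + 1) → ℤ) → (Fin (d + 1) → ℤ) → ℝ)
    (hP : IsRandomWalk d P) (t : ℕ)
    (x : Fin (d + 1) → ℤ) (hx : x (Fin.last d) = 0)
    (f : (Fin (d + 1) → ℤ) → ℝ) :
    expect P t x (NmatFun P t x f) = expect P t x (Ntrans P f) := by
  refine finsum_congr fun w => ?_
  by_cases hw : P t x w = 0
  · rw [hw, mul_zero, mul_zero]
  · rw [NmatFun_eq_Ntrans_of_ne_zero hP hx f hw]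

/-- `E[(N_{t,x} f)(Z^x_t)] = E[(N f)(Z^x_t)]`. -/
theorem stmt_14 (d : ℕ) (P : ℕ → (Fin (d + 1) → ℤ) → (Fin (d + 1) → ℤ) → ℝ)
    (hP : IsRandomWalk d P) (t : ℕ) (ht : 1 ≤ t)
    (x : Fin (d + 1) → ℤ) (hx : x (Fin.last d) = 0)
    (f : (Fin (d + 1) → ℤ) → ℝ) (hf : ∀ z, z (Fin.last d) ≤ 0 → f z = 0) :
    expect P t x (NmatFun P t x f) = expect P t x (Ntrans P f) :=
  stmt_14_general d P hP t x hx f
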